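/- Validity of the reduction-stencil frame for odd dimensions: if d is odd, then the family B(α) := A(2α) for α ∈ (ZMod d)² (doubled phase-point operators sampled at even grid sites) is a valid PPO frame; that is, (A1) each B(α) is Hermitian, (A2) Tr(B(α)) = 1, (A3) Tr(B(α)†·B(β)) = d if α = β and 0 otherwise, and (A4) V(k)·B(α)·V(k)† = B(α + k) for all k ∈ ℤ² (α + k taken mod d). -/

import Mathlib

open scoped BigOperators
open Matrix

noncomputable section

/-- `omega n a = exp(2πi a / n)`, the `n`-th roots of unity raised to integer power `a`. -/
def omega (n : ℕ) (a : ℤ) : ℂ := Complex.exp (2 * Real.pi * Complex.I * a / n)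

/-- `Zpow d k = Σ_j ω_d^(k·j) |j⟩⟨j|`, the `k`-th power of the clock operator. -/
def Zpow (d : ℕ) (k : ℤ) : Matrix (ZMod d) (ZMod d) ℂ :=
  Matrix.of fun i j => if i = j then omega d (k * (j.val : ℤ)) else 0

/-- `Xpow d k = Σ_j |j+k⟩⟨j|`, the `k`-th power of the shift operator. -/
def Xpow (d : ℕ) (k : ℤ) : Matrix (ZMod d) (ZMod d) ℂ :=
  Matrix.of fun i j => if i = j + (k : ZMod d) then 1 else 0

/-- The Weyl–Heisenberg displacement operator `V(k) = ω_{2d}^{-k₁k₂} Z^{k₂} X^{k₁}` for `k ∈ ℤ²`. -/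
def Vint (d : ℕ) [NeZero d] (k : ℤ × ℤ) : Matrix (ZMod d) (ZMod d) ℂ :=
  omega (2 * d) (-(k.1 * k.2)) • (Zpow d k.2 * Xpow d k.1)

/-- The WHDO on the doubled phase space `(ZMod (2d))²`. -/
def V (d : ℕ) [NeZero d] (m : ZMod (2 * d) × ZMod (2 * d)) : Matrix (ZMod d) (ZMod d) ℂ :=
  Vint d ((m.1.val : ℤ), (m.2.val : ℤ))

/-- Discrete parity operator `R = Σ_j |-j⟩⟨j|`. -/
def R (d : ℕ) : Matrix (ZMod d) (ZMod d) ℂ :=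
  Matrix.of fun i j => if i = -j then 1 else 0

/-- Doubled phase-point operator `A(m) = V(m)·R`. -/
def A (d : ℕ) [NeZero d] (m : ZMod (2 * d) × ZMod (2 * d)) : Matrix (ZMod d) (ZMod d) ℂ :=
  V d m * R d

variable (d : ℕ) [NeZero d]

/-- Doubled Wigner transform: `Wig[O](m) = (1/(2d)) Tr(A(m)† O)`. -/
def Wig (O : Matrix (ZMod d) (ZMod d) ℂ) (m : ZMod (2 * d) × ZMod (2 * d)) : ℂ :=
  (1 / (2 * (d : ℂ))) * ((A d m)ᴴ * O).trace

/-- Doubled Weyl transform: `Op[f] = (1/2) Σ_m f(m) A(m)`. -/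
def OpW (f : ZMod (2 * d) × ZMod (2 * d) → ℂ) : Matrix (ZMod d) (ZMod d) ℂ :=
  (1 / 2 : ℂ) • ∑ m : ZMod (2 * d) × ZMod (2 * d), f m • A d m

/-- The projector `P = Wig ∘ Op` on functions on the doubled phase space. -/
def P (f : ZMod (2 * d) × ZMod (2 * d) → ℂ) : ZMod (2 * d) × ZMod (2 * d) → ℂ :=
  Wig d (OpW d f)

/-- Inner product on functions on the doubled phase space. -/
def ip (f g : ZMod (2 * d) × ZMod (2 * d) → ℂ) : ℂ :=
  ∑ m : ZMod (2 * d) × ZMod (2 * d), (starRingEnd ℂ) (f m) * g m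

/-- Cross-correlation `(f ⋆ g)(m) = Σ_{m'} conj(f m') g(m'+m)`. -/
def crossCor (f g : ZMod (2 * d) × ZMod (2 * d) → ℂ) (m : ZMod (2 * d) × ZMod (2 * d)) : ℂ :=
  ∑ m' : ZMod (2 * d) × ZMod (2 * d), (starRingEnd ℂ) (f m') * g (m' + m)

/-- The doubling map `ZMod d → ZMod (2d)`, `a ↦ 2a`. -/
def dbl (a : ZMod d) : ZMod (2 * d) := ((2 * a.val : ℕ) : ZMod (2 * d))

/-- The doubling map on the phase space. -/
def dbl2 (α : ZMod d × ZMod d) : ZMod (2 * d) × ZMod (2 * d) := (dbl d α.1, dbl d α.2)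

/-- A stencil `M` is valid if its projection `M̄ = P M` is real-valued (M1),
sums to 1 (M2), and satisfies the autocorrelation condition (M3). -/
def IsValidStencil (M : ZMod (2 * d) × ZMod (2 * d) → ℂ) : Prop :=
  (∀ m, (starRingEnd ℂ) (P d M m) = P d M m) ∧
  (∑ m : ZMod (2 * d) × ZMod (2 * d), P d M m) = 1 ∧
  (∀ α : ZMod d × ZMod d,
    crossCor d (P d M) (P d M) (dbl2 d α) = if α = 0 then 1 else 0)

/-- The `M`-PPO frame generated by a stencil `M`:
`A^M(α) = (1/2) Σ_{m'} M(m') A(m' + 2α)`. -/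
def AM (M : ZMod (2 * d) × ZMod (2 * d) → ℂ) (α : ZMod d × ZMod d) :
    Matrix (ZMod d) (ZMod d) ℂ :=
  (1 / 2 : ℂ) • ∑ m' : ZMod (2 * d) × ZMod (2 * d), M m' • A d (m' + dbl2 d α)

/-- A family of phase-point operators on `(ZMod d)²` is a valid PPO frame if it is
Hermitian (A1), trace-1 (A2), orthogonal (A3), and WHDO-covariant (A4). -/
def IsValidPPOFrame (B : ZMod d × ZMod d → Matrix (ZMod d) (ZMod d) ℂ) : Prop :=
  (∀ α, (B α)ᴴ = B α) ∧
  (∀ α, (B α).trace = 1) ∧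
  (∀ α β, ((B α)ᴴ * B β).trace = if α = β then (d : ℂ) else 0) ∧
  (∀ (k : ℤ × ℤ) (α : ZMod d × ZMod d),
    Vint d k * B α * (Vint d k)ᴴ = B (α + ((k.1 : ZMod d), (k.2 : ZMod d))))

/-- The `M`-Wigner transform: `Wig^M[O](α) = (1/d) Tr(A^M(α)† O)`. -/
def WigM (M : ZMod (2 * d) × ZMod (2 * d) → ℂ) (O : Matrix (ZMod d) (ZMod d) ℂ)
    (α : ZMod d × ZMod d) : ℂ :=
  (1 / (d : ℂ)) * ((AM d M α)ᴴ * O).trace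

/-- The `M`-Weyl transform: `Op^M[f] = Σ_α f(α) A^M(α)`. -/
def OpM (M : ZMod (2 * d) × ZMod (2 * d) → ℂ) (f : ZMod d × ZMod d → ℂ) :
    Matrix (ZMod d) (ZMod d) ℂ :=
  ∑ α : ZMod d × ZMod d, f α • AM d M α

/-- The symplectic discrete Fourier transform. -/
def SDFT (f : ZMod (2 * d) × ZMod (2 * d) → ℂ) (m : ZMod (2 * d) × ZMod (2 * d)) : ℂ :=
  (1 / (2 * (d : ℂ))) * ∑ m' : ZMod (2 * d) × ZMod (2 * d),
    omega (2 * d) (-((m.1.val : ℤ) * (m'.2.val : ℤ) - (m.2.val : ℤ) * (m'.1.val : ℤ))) * f m'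


/-- Coarse-grain-stencil PPO frame: `B(α) = (1/2) Σ_{b∈{0,1}²} A(2α + b)`. -/
def Bcgs (α : ZMod d × ZMod d) : Matrix (ZMod d) (ZMod d) ℂ :=
  (1 / 2 : ℂ) • ∑ b : ZMod 2 × ZMod 2,
    A d (dbl d α.1 + (b.1.val : ZMod (2 * d)), dbl d α.2 + (b.2.val : ZMod (2 * d)))

/-- Momentum basis state `|p⟩ = (1/√d) Σ_j ω_d^{p j} |j⟩`. -/
def pvec (p : ZMod d) : ZMod d → ℂ :=
  fun j => (1 / ((Real.sqrt d : ℝ) : ℂ)) * omega d ((p.val : ℤ) * (j.val : ℤ))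

/-- One-dimensional Dirichlet kernel `K(m) = (1/d) Σ_{t=-(d-1)/2}^{(d-1)/2} ω_{2d}^{t m}`. -/
def Kdir (m : ZMod (2 * d)) : ℂ :=
  (1 / (d : ℂ)) * ∑ t ∈ Finset.Icc (-(((d : ℤ) - 1) / 2)) (((d : ℤ) - 1) / 2),
    omega (2 * d) (t * (m.val : ℤ))

end

section Stmt16Aux

lemma omega_add' (n : ℕ) (a b : ℤ) : omega n (a + b) = omega n a * omega n b := by
  rw [omega, omega, omega, ← Complex.exp_add]
  congr 1
  push_cast
  ring

lemma omega_zero' (n : ℕ) : omega n 0 = 1 := by simp [omega]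

lemma omega_int_mul' (n : ℕ) (hn : n ≠ 0) (t : ℤ) : omega n (t * n) = 1 := by
  have hnC : (n : ℂ) ≠ 0 := Nat.cast_ne_zero.mpr hn
  have h : (2 * (Real.pi:ℂ) * Complex.I * ((t * n : ℤ) : ℂ) / n)
      = (t : ℂ) * (2 * Real.pi * Complex.I) := by
    push_cast
    field_simp
  rw [omega, h, Complex.exp_int_mul, Complex.exp_two_pi_mul_I, _root_.one_zpow]

lemma omega_eq_of_dvd (n : ℕ) (hn : n ≠ 0) (a b : ℤ) (h : (n:ℤ) ∣ a - b) :
    omega n a = omega n b := by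
  obtain ⟨t, ht⟩ := h
  have hab : a = b + t * n := by linarith
  rw [hab, omega_add', omega_int_mul' n hn, mul_one]

lemma omega_conj' (n : ℕ) (a : ℤ) : (starRingEnd ℂ) (omega n a) = omega n (-a) := by
  rw [omega, omega, ← Complex.exp_conj]
  congr 1
  simp [map_div₀, Complex.conj_I, map_ofNat]

lemma omega_two_mul' (d : ℕ) (hd : d ≠ 0) (a : ℤ) : omega (2*d) (2*a) = omega d a := by
  have hdC : (d : ℂ) ≠ 0 := Nat.cast_ne_zero.mpr hd
  rw [omega, omega]
  congr 1
  push_cast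
  field_simp

lemma omega_mul_nat' (n : ℕ) (k : ℤ) (m : ℕ) : omega n (k * m) = (omega n k) ^ m := by
  rw [omega, omega, ← Complex.exp_nat_mul]
  congr 1
  push_cast
  ring

lemma omega_ne_one' (n : ℕ) (hn : n ≠ 0) (k : ℤ) (hk : ¬ (n:ℤ) ∣ k) : omega n k ≠ 1 := by
  intro h
  rw [omega, Complex.exp_eq_one_iff] at h
  obtain ⟨m, hm⟩ := h
  have hnC : (n : ℂ) ≠ 0 := Nat.cast_ne_zero.mpr hn
  have hπ : (Real.pi : ℂ) ≠ 0 := Complex.ofReal_ne_zero.2 Real.pi_ne_zero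
  have hI : Complex.I ≠ 0 := Complex.I_ne_zero
  have hk' : (k : ℂ) = (m : ℂ) * n := by
    field_simp at hm
    have h2 : (2 * (Real.pi:ℂ) * Complex.I) * (k : ℂ)
        = (2 * (Real.pi:ℂ) * Complex.I) * ((m:ℂ) * n) := by linear_combination (2 * (Real.pi:ℂ) * Complex.I) * hm
    exact mul_left_cancel₀ (by simp [hπ, hI]) h2
  have : k = m * n := by exact_mod_cast hk'
  exact hk ⟨m, by linarith⟩

lemma sum_omega_zero' (d : ℕ) [NeZero d] (k : ℤ) (hk : (k : ZMod d) ≠ 0) :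
    ∑ i : ZMod d, omega d (k * (i.val : ℤ)) = 0 := by
  have hd : d ≠ 0 := NeZero.ne d
  have hdvd : ¬ (d:ℤ) ∣ k := fun h => hk ((ZMod.intCast_zmod_eq_zero_iff_dvd k d).mpr h)
  have hne : omega d k ≠ 1 := omega_ne_one' d hd k hdvd
  have hpow : (omega d k) ^ d = 1 := by
    rw [← omega_mul_nat', omega_eq_of_dvd d hd _ 0 (by simp), omega_zero']
  calc ∑ i : ZMod d, omega d (k * (i.val : ℤ))
      = ∑ i : ZMod d, (omega d k) ^ i.val := by
        refine Finset.sum_congr rfl fun i _ => omega_mul_nat' d k i.val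
    _ = ∑ j ∈ Finset.range d, (omega d k) ^ j := by
        apply Finset.sum_nbij' (i := fun (a : ZMod d) => a.val) (j := fun (a : ℕ) => (a : ZMod d)) <;>
          simp [ZMod.val_lt, ZMod.val_natCast, Finset.mem_range] <;>
          exact fun a ha => Nat.mod_eq_of_lt ha
    _ = ((omega d k) ^ d - 1) / (omega d k - 1) := geom_sum_eq hne d
    _ = 0 := by rw [hpow]; simp

end Stmt16Aux
section Stmt16Aux2

variable (d : ℕ) [NeZero d]

lemma Vint_apply' (k : ℤ × ℤ) (i j : ZMod d) :
    Vint d k i j = if i = j + ((k.1 : ZMod d)) then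
      omega (2*d) (-(k.1*k.2) + 2*(k.2 * (i.val:ℤ))) else 0 := by
  have hd : d ≠ 0 := NeZero.ne d
  rw [Vint, Matrix.smul_apply, Matrix.mul_apply]
  simp only [Zpow, Xpow, Matrix.of_apply, ite_mul, zero_mul]
  rw [Finset.sum_ite_eq]
  simp only [Finset.mem_univ, if_true, smul_eq_mul]
  split
  · rw [mul_one, ← omega_two_mul' d hd (k.2 * (i.val:ℤ)), ← omega_add']
  · rw [mul_zero, mul_zero]

lemma A_apply' (m : ZMod (2*d) × ZMod (2*d)) (i j : ZMod d) :
    A d m i j = if i + j = (((m.1.val : ℤ)) : ZMod d) then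
      omega (2*d) (-((m.1.val:ℤ)*(m.2.val:ℤ)) + 2*((m.2.val:ℤ) * (i.val:ℤ))) else 0 := by
  rw [A, V, Matrix.mul_apply]
  simp only [R, Matrix.of_apply, mul_ite, mul_one, mul_zero]
  rw [Finset.sum_ite_eq', if_pos (Finset.mem_univ _), Vint_apply']
  congr 1
  rw [eq_iff_iff]
  constructor
  · intro h; rw [eq_neg_add_iff_add_eq] at h; rw [← h]; ring
  · intro h; rw [eq_neg_add_iff_add_eq, ← h]; ring

lemma dbl_val (a : ZMod d) : (dbl d a).val = 2 * a.val := by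
  rw [dbl, ZMod.val_natCast]
  exact Nat.mod_eq_of_lt (by have := a.val_lt; omega)

lemma B_apply (α : ZMod d × ZMod d) (i j : ZMod d) :
    A d (dbl2 d α) i j = if i + j = 2 * α.1 then
      omega (2*d) (-((2*(α.1.val:ℤ))*(2*(α.2.val:ℤ))) + 2*((2*(α.2.val:ℤ)) * (i.val:ℤ))) else 0 := by
  rw [dbl2, A_apply']
  have h1 : ((dbl d α.1).val : ℤ) = 2*(α.1.val:ℤ) := by rw [dbl_val]; push_cast; ring
  have h2 : ((dbl d α.2).val : ℤ) = 2*(α.2.val:ℤ) := by rw [dbl_val]; push_cast; ring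
  rw [h1, h2]
  congr 1
  rw [eq_iff_iff]
  push_cast [ZMod.natCast_val, ZMod.cast_id]
  tauto

end Stmt16Aux2
section Stmt16Aux3

variable (d : ℕ) [NeZero d]

lemma two_d_ne : (2*d) ≠ 0 := by have := NeZero.ne d; omega

lemma omega2d_eq (a b c : ℤ) (h : a - b = 2 * c) (hc : ((c : ℤ) : ZMod d) = 0) :
    omega (2*d) a = omega (2*d) b := by
  apply omega_eq_of_dvd (2*d) (two_d_ne d)
  obtain ⟨t, ht⟩ := (ZMod.intCast_zmod_eq_zero_iff_dvd c d).1 hc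
  exact ⟨t, by rw [h, ht]; push_cast; ring⟩

lemma Vint_mul_apply (k : ℤ × ℤ) (M : Matrix (ZMod d) (ZMod d) ℂ) (i j : ZMod d) :
    (Vint d k * M) i j
      = omega (2*d) (-(k.1*k.2) + 2*(k.2*(i.val:ℤ))) * M (i - (k.1:ZMod d)) j := by
  rw [Matrix.mul_apply]
  simp only [Vint_apply', ite_mul, zero_mul]
  have hc : ∀ l : ZMod d, (i = l + (k.1:ZMod d)) = (l = i - (k.1:ZMod d)) := by
    intro l
    apply propext
    constructor <;> intro h <;> rw [h] <;> ring
  simp_rw [hc]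
  rw [Finset.sum_ite_eq', if_pos (Finset.mem_univ _)]

lemma mul_conjT_Vint_apply (k : ℤ × ℤ) (M : Matrix (ZMod d) (ZMod d) ℂ) (i j : ZMod d) :
    (M * (Vint d k)ᴴ) i j
      = omega (2*d) (-(-(k.1*k.2) + 2*(k.2*(j.val:ℤ)))) * M i (j - (k.1:ZMod d)) := by
  rw [Matrix.mul_apply]
  simp only [Matrix.conjTranspose_apply, Vint_apply', ← starRingEnd_apply,
    apply_ite (starRingEnd ℂ), map_zero, omega_conj']
  have hc : ∀ l : ZMod d, (j = l + (k.1:ZMod d)) = (l = j - (k.1:ZMod d)) := by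
    intro l
    apply propext
    constructor <;> intro h <;> rw [h] <;> ring
  simp_rw [hc, mul_ite, mul_zero]
  rw [Finset.sum_ite_eq', if_pos (Finset.mem_univ _), mul_comm]

end Stmt16Aux3

theorem stmt16 (d : ℕ) [NeZero d] (hd : Odd d) :
    IsValidPPOFrame d (fun α => A d (dbl2 d α)) := by
  have hdne : d ≠ 0 := NeZero.ne d
  have h2u : IsUnit (2 : ZMod d) := by
    have h : Nat.Coprime 2 d := by
      rw [Nat.Prime.coprime_iff_not_dvd Nat.prime_two]; rw [Nat.odd_iff] at hd; omega
    simpa using (ZMod.isUnit_iff_coprime 2 d).mpr h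
  refine ⟨?_, ?_, ?_, ?_⟩
  · -- (A1) Hermitian
    intro α
    ext i j
    show star (A d (dbl2 d α) j i) = A d (dbl2 d α) i j
    rw [← starRingEnd_apply, B_apply, B_apply, apply_ite (starRingEnd ℂ), map_zero,
      omega_conj', add_comm j i]
    by_cases h : i + j = 2 * α.1
    · rw [if_pos h, if_pos h]
      refine omega2d_eq d _ _
        ((2*(α.2.val:ℤ)) * (2*(α.1.val:ℤ) - (j.val:ℤ) - (i.val:ℤ))) (by ring) ?_
      push_cast [ZMod.natCast_val, ZMod.cast_id]
      linear_combination (-(2 * α.2)) * h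
    · rw [if_neg h, if_neg h]
  · -- (A2) trace one
    intro α
    unfold Matrix.trace
    simp only [Matrix.diag_apply, B_apply]
    have hcond : ∀ i : ZMod d, (i + i = 2 * α.1) = (i = α.1) := by
      intro i
      apply propext
      constructor
      · intro h
        exact h2u.mul_left_cancel (by rw [← two_mul] at h; rw [h])
      · intro h; rw [h]; ring
    simp_rw [hcond]
    rw [Finset.sum_ite_eq', if_pos (Finset.mem_univ _),
      show (-((2*(α.1.val:ℤ))*(2*(α.2.val:ℤ))) + 2*((2*(α.2.val:ℤ)) * (α.1.val:ℤ))) = 0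
        from by ring, omega_zero']
  · -- (A3) orthogonality
    intro α β
    unfold Matrix.trace
    simp only [Matrix.diag_apply, Matrix.mul_apply, Matrix.conjTranspose_apply,
      ← starRingEnd_apply]
    by_cases hab : α = β
    · subst hab
      rw [if_pos rfl]
      calc ∑ j : ZMod d, ∑ i : ZMod d,
            (starRingEnd ℂ) (A d (dbl2 d α) i j) * (A d (dbl2 d α) i j)
          = ∑ j : ZMod d, ∑ i : ZMod d, (if i = 2 * α.1 - j then (1:ℂ) else 0) := by
            refine Finset.sum_congr rfl fun j _ => Finset.sum_congr rfl fun i _ => ?_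
            rw [B_apply, apply_ite (starRingEnd ℂ), map_zero, omega_conj']
            by_cases h : i + j = 2 * α.1
            · rw [if_pos h, if_pos h, if_pos (eq_sub_of_add_eq h), ← omega_add',
                show ∀ e : ℤ, -e + e = 0 from fun e => by ring, omega_zero']
            · rw [if_neg h, if_neg h, zero_mul, if_neg (fun hh => h (by rw [hh]; ring))]
        _ = ∑ j : ZMod d, (1:ℂ) := by
            refine Finset.sum_congr rfl fun j _ => ?_
            rw [Finset.sum_ite_eq', if_pos (Finset.mem_univ _)]
        _ = (d : ℂ) := by
            rw [Finset.sum_const, Finset.card_univ, ZMod.card, nsmul_eq_mul, mul_one]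
    · rw [if_neg hab]
      by_cases h1 : α.1 = β.1
      · have h2 : α.2 ≠ β.2 := fun h2 => hab (Prod.ext h1 h2)
        obtain ⟨a1, a2⟩ := α
        obtain ⟨b1, b2⟩ := β
        replace h1 : a1 = b1 := h1
        replace h2 : a2 ≠ b2 := h2
        subst h1
        have key : ∀ j : ZMod d, ∀ i : ZMod d,
            (starRingEnd ℂ) (A d (dbl2 d (a1, a2)) i j) * (A d (dbl2 d (a1, b2)) i j)
            = if i = 2 * a1 - j then
                omega (2*d) ((2*(a1.val:ℤ))*(2*(a2.val:ℤ)) - (2*(a1.val:ℤ))*(2*(b2.val:ℤ)))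
                * omega d ((2*((b2.val:ℤ) - (a2.val:ℤ))) * (i.val:ℤ)) else 0 := by
          intro j i
          rw [B_apply, B_apply, apply_ite (starRingEnd ℂ), map_zero, omega_conj']
          simp only
          by_cases h : i + j = 2 * a1
          · rw [if_pos h, if_pos h, if_pos (eq_sub_of_add_eq h), ← omega_add',
              ← omega_two_mul' d hdne, ← omega_add']
            congr 1
            ring
          · rw [if_neg h, if_neg h, zero_mul, if_neg (fun hh => h (by rw [hh]; ring))]
        calc ∑ j : ZMod d, ∑ i : ZMod d,
              (starRingEnd ℂ) (A d (dbl2 d (a1, a2)) i j) * (A d (dbl2 d (a1, b2)) i j)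
            = ∑ j : ZMod d,
                (omega (2*d) ((2*(a1.val:ℤ))*(2*(a2.val:ℤ)) - (2*(a1.val:ℤ))*(2*(b2.val:ℤ)))
                * omega d ((2*((b2.val:ℤ) - (a2.val:ℤ))) * (((2*a1 - j) : ZMod d).val:ℤ))) := by
              refine Finset.sum_congr rfl fun j _ => ?_
              simp_rw [key j]
              rw [Finset.sum_ite_eq', if_pos (Finset.mem_univ _)]
          _ = 0 := by
              rw [← Finset.mul_sum]
              have hre : (∑ j : ZMod d,
                  omega d ((2*((b2.val:ℤ) - (a2.val:ℤ))) * (((2*a1 - j) : ZMod d).val:ℤ)))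
                  = ∑ x : ZMod d,
                  omega d ((2*((b2.val:ℤ) - (a2.val:ℤ))) * (x.val:ℤ)) :=
                Equiv.sum_comp (Equiv.subLeft (2*a1))
                  (fun x => omega d ((2*((b2.val:ℤ) - (a2.val:ℤ))) * (x.val:ℤ)))
              rw [hre, sum_omega_zero' d _ ?_, mul_zero]
              intro h0
              apply h2
              push_cast [ZMod.natCast_val, ZMod.cast_id] at h0
              have h0' : (2 : ZMod d) * (b2 - a2) = 2 * 0 := by
                rw [mul_zero]; linear_combination h0
              have := h2u.mul_left_cancel h0'
              rw [sub_eq_zero] at this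
              exact this.symm
      · refine Finset.sum_eq_zero fun j _ => Finset.sum_eq_zero fun i _ => ?_
        rw [B_apply, B_apply, apply_ite (starRingEnd ℂ), map_zero]
        by_cases ha : i + j = 2 * α.1
        · rw [if_neg fun hb : i + j = 2 * β.1 => h1 (h2u.mul_left_cancel (by
            rw [← ha, ← hb])), mul_zero]
        · rw [if_neg ha, zero_mul]
  · -- (A4) covariance
    intro k α
    ext i j
    show (Vint d k * A d (dbl2 d α) * (Vint d k)ᴴ) i j
      = A d (dbl2 d (α + ((k.1 : ZMod d), (k.2 : ZMod d)))) i j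
    rw [mul_conjT_Vint_apply, Vint_mul_apply, B_apply, B_apply]
    simp only [Prod.fst_add, Prod.snd_add]
    by_cases hcond : i + j = 2 * (α.1 + (k.1:ZMod d))
    · rw [if_pos (show (i - (k.1:ZMod d)) + (j - (k.1:ZMod d)) = 2 * α.1 from by
        linear_combination hcond), if_pos hcond, ← omega_add', ← omega_add']
      refine omega2d_eq d _ _
        (k.2 * (i.val:ℤ) - k.2 * (j.val:ℤ)
          - 2*(α.1.val:ℤ)*(α.2.val:ℤ) + 2*(α.2.val:ℤ)*(((i - (k.1:ZMod d)).val:ℤ))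
          + 2*(((α.1 + (k.1:ZMod d)).val:ℤ))*(((α.2 + (k.2:ZMod d)).val:ℤ))
          - 2*(((α.2 + (k.2:ZMod d)).val:ℤ))*(i.val:ℤ)) (by ring) ?_
      push_cast [ZMod.natCast_val, ZMod.cast_id]
      linear_combination (-(k.2 : ZMod d)) * hcond
    · rw [if_neg (fun h => hcond (by linear_combination h)), if_neg hcond, mul_zero, mul_zero]
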